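/- For all natural numbers n and l with l > n, the sum over i from 0 to l (using generalized binomial coefficients when n - i < 0) of [ -C(n-i, i) * C(l+i, 2i+1) + C(n-i, i-1) * C(l+i, 2i) ] equals 0; equivalently, the partial sum from i = 0 to n equals (-1)^{n+1} C(l, n+1) and the partial sum from i = n+1 to l equals (-1)^n C(l, n+1). -/

import Mathlib

open Finset

/-- Generalized binomial coefficient: classical for nonnegative upper index,
`(-1)^k * C(k-m-1, k)` for negative upper index, and `0` for negative lower index. -/
def gchoose (m k : ℤ) : ℤ :=
  if k < 0 then 0
  else if m < 0 then (-1) ^ k.toNat * ((k - m - 1).toNat.choose k.toNat : ℤ)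
  else (m.toNat.choose k.toNat : ℤ)

/-- The double sequence `v_{k,n}`. -/
noncomputable def vseq (k n : ℤ) : ℤ :=
  ∑ i ∈ Finset.Icc (n + 1) (n + k),
    (-(gchoose (n - i) i * gchoose (n + k + i) (2 * i + 1))
      + gchoose (n - i) (i - 1) * gchoose (n + k + i) (2 * i))

/-!
Shift the lower index of the second factor by `j`, writing `vterm n l j i` for the resulting
summand and `vsum M n l j` for its sum over `i < M`. Pascal's rule in the upper index `l + i`
gives `vsum M n (l + 1) j = vsum M n l j + vsum M n l (j + 1)`, which reduces everything to
`l = 0`. There the sums telescope, `vsum M n 0 j + vsum M (n - 1) 0 (j - 1) = vcert n j M`,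
against a certificate that vanishes once `j < M`; so the full sums vanish by induction on `j`.
For `M = n + 1` the boundary term of the certificate cancels the last summand, so the head sums
only flip sign as `n` and `j` grow together, which evaluates them to `(-1)^(n+1) C(0, n+1-j)`,
and Pascal's rule lifts this to `(-1)^(n+1) C(l, n+1-j)`. The tail is full sum minus head.
-/

lemma gchoose_of_neg (m : ℤ) {k : ℤ} (hk : k < 0) : gchoose m k = 0 := by
  simp [gchoose, hk]

lemma gchoose_natCast_right (m : ℤ) (k : ℕ) : gchoose m k = Ring.choose m k := by
  rw [gchoose, if_neg (by omega), Int.toNat_natCast]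
  split_ifs with hm
  · obtain ⟨a, rfl⟩ : ∃ a : ℕ, m = -a := ⟨m.natAbs, by omega⟩
    rw [Ring.choose_neg, show (a : ℤ) + k - 1 = ((k - -(a : ℤ) - 1).toNat : ℕ) by omega,
      Ring.choose_natCast, Int.negOnePow_def, Units.smul_def]
    simp
  · rw [← Ring.choose_natCast, Int.toNat_of_nonneg (by omega)]

lemma gchoose_natCast (a b : ℕ) : gchoose a b = a.choose b := by
  rw [gchoose_natCast_right, Ring.choose_natCast]

lemma gchoose_add_one (m k : ℤ) : gchoose (m + 1) k = gchoose m k + gchoose m (k - 1) := by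
  rcases lt_trichotomy k 0 with hk | rfl | hk
  · simp [gchoose_of_neg _ hk, gchoose_of_neg _ (show k - 1 < 0 by omega)]
  · rw [gchoose_of_neg m (show (0 : ℤ) - 1 < 0 by omega), add_zero, ← Nat.cast_zero,
      gchoose_natCast_right, gchoose_natCast_right, Ring.choose_zero_right, Ring.choose_zero_right]
  · obtain ⟨k, rfl⟩ : ∃ k' : ℕ, k = k' + 1 := ⟨(k - 1).toNat, by omega⟩
    rw [add_sub_cancel_right, ← Nat.cast_succ, gchoose_natCast_right, gchoose_natCast_right,
      gchoose_natCast_right, Ring.choose_succ_succ, add_comm]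

lemma gchoose_eq_zero_of_lt {m k : ℤ} (hm : 0 ≤ m) (h : m < k) : gchoose m k = 0 := by
  lift m to ℕ using hm
  lift k to ℕ using by omega
  rw [gchoose_natCast, Nat.choose_eq_zero_of_lt (by omega), Nat.cast_zero]

lemma gchoose_neg_one (k : ℕ) : gchoose (-1) k = (-1) ^ k := by
  rw [gchoose, if_neg (by omega), if_pos (by omega), Int.toNat_natCast,
    show ((k : ℤ) - -1 - 1).toNat = k by omega, Nat.choose_self, Nat.cast_one, mul_one]

/-- The summand of `vseq` with `l = n + k`, the lower indices of its second factor lowered by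
`j`. -/
def vterm (n l j i : ℤ) : ℤ :=
  -(gchoose (n - i) i * gchoose (l + i) (2 * i + 1 - j))
    + gchoose (n - i) (i - 1) * gchoose (l + i) (2 * i - j)

def vcert (n j i : ℤ) : ℤ := -(gchoose (n - i) (i - 1) * gchoose i (2 * i - j))

lemma vterm_add_one (n l j i : ℤ) :
    vterm n (l + 1) j i = vterm n l j i + vterm n l (j + 1) i := by
  simp only [vterm, add_right_comm l 1 i, gchoose_add_one (l + i)]
  rw [show 2 * i + 1 - (j + 1) = 2 * i - j by ring, show 2 * i - j - 1 = 2 * i - (j + 1) by ring,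
    show 2 * i + 1 - j - 1 = 2 * i - j by ring]
  ring

lemma vterm_zero_add_vterm_zero (n j i : ℤ) :
    vterm n 0 j i + vterm (n - 1) 0 (j - 1) i = vcert n j (i + 1) - vcert n j i := by
  simp only [vterm, vcert, zero_add]
  rw [show n - i = n - (i + 1) + 1 by ring, show n - 1 - i = n - (i + 1) by ring,
    gchoose_add_one (n - (i + 1)) i, gchoose_add_one i (2 * (i + 1) - j), add_sub_cancel_right,
    show 2 * (i + 1) - j = 2 * i + 1 - (j - 1) by ring,
    show 2 * i + 1 - (j - 1) - 1 = 2 * i + 1 - j by ring,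
    show 2 * i - (j - 1) = 2 * i + 1 - j by ring]
  ring

lemma vterm_zero_of_neg (n : ℤ) {j i : ℤ} (hi : 0 ≤ i) (hj : j < 0) : vterm n 0 j i = 0 := by
  rw [vterm, zero_add, gchoose_eq_zero_of_lt hi (by omega), gchoose_eq_zero_of_lt hi (by omega)]
  ring

def vsum (M : ℕ) (n l j : ℤ) : ℤ := ∑ i ∈ range M, vterm n l j i

lemma vsum_add_one (M : ℕ) (n l j : ℤ) :
    vsum M n (l + 1) j = vsum M n l j + vsum M n l (j + 1) := by
  simp only [vsum, vterm_add_one, sum_add_distrib]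

lemma vsum_zero_of_neg (M : ℕ) (n : ℤ) {j : ℤ} (hj : j < 0) : vsum M n 0 j = 0 :=
  sum_eq_zero fun i _ => vterm_zero_of_neg n (Nat.cast_nonneg i) hj

lemma vsum_zero_add_vsum_zero (M : ℕ) (n j : ℤ) :
    vsum M n 0 j + vsum M (n - 1) 0 (j - 1) = vcert n j M := by
  have h0 : vcert n j 0 = 0 := by
    rw [vcert, gchoose_of_neg _ (show (0 : ℤ) - 1 < 0 by omega), zero_mul, neg_zero]
  have htel := sum_range_sub (fun i : ℕ => vcert n j i) M
  simp only [Nat.cast_succ, Nat.cast_zero, h0, sub_zero] at htel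
  rw [vsum, vsum, ← sum_add_distrib, ← htel]
  exact sum_congr rfl fun i _ => vterm_zero_add_vterm_zero n j i

lemma vsum_zero_eq_zero {M : ℕ} {j : ℤ} (hj : j < M) (n : ℤ) : vsum M n 0 j = 0 := by
  rcases lt_or_ge j (-1) with hneg | hj1
  · exact vsum_zero_of_neg M n (by omega)
  induction j, hj1 using Int.leInduction generalizing n with
  | base => exact vsum_zero_of_neg M n (by omega)
  | succ j _ ih =>
    have hcert : vcert n (j + 1) M = 0 := by
      rw [vcert, gchoose_eq_zero_of_lt (Nat.cast_nonneg M) (by omega), mul_zero, neg_zero]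
    have htel := vsum_zero_add_vsum_zero M n (j + 1)
    rwa [add_sub_cancel_right, ih (by omega) (n - 1), hcert, add_zero] at htel

lemma vsum_eq_zero (l : ℕ) {M : ℕ} {j : ℤ} (h : l + j < M) (n : ℤ) : vsum M n l j = 0 := by
  induction l generalizing j with
  | zero => exact vsum_zero_eq_zero (by omega) n
  | succ l ih =>
    rw [Nat.cast_succ, vsum_add_one, ih (by omega), ih (by omega), add_zero]

lemma vcert_succ_eq_vterm (n : ℕ) (j : ℤ) :
    vcert (n + 1) j (n + 2) = vterm n 0 (j - 1) (n + 1) := by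
  have hneg : ∀ k : ℕ, gchoose (-1) (k + 1) = -gchoose (-1) k := fun k => by
    rw [gchoose_neg_one, ← Nat.cast_succ, gchoose_neg_one, pow_succ, mul_neg_one]
  rw [vcert, vterm, show (n : ℤ) + 1 - (n + 2) = -1 by ring,
    show (n : ℤ) - (n + 1) = -1 by ring,
    show (n : ℤ) + 2 - 1 = n + 1 by ring, add_sub_cancel_right, hneg, zero_add,
    show (n : ℤ) + 2 = n + 1 + 1 by ring, gchoose_add_one (n + 1),
    show 2 * ((n : ℤ) + 1 + 1) - j = 2 * (n + 1) + 1 - (j - 1) by ring,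
    show 2 * ((n : ℤ) + 1) + 1 - (j - 1) - 1 = 2 * (n + 1) - (j - 1) by ring]
  ring

lemma vsum_head_succ (n : ℕ) (j : ℤ) :
    vsum (n + 2) (n + 1) 0 j = -vsum (n + 1) n 0 (j - 1) := by
  have htel := vsum_zero_add_vsum_zero (n + 2) (n + 1) j
  have hlast :
      vsum (n + 2) n 0 (j - 1) = vsum (n + 1) n 0 (j - 1) + vterm n 0 (j - 1) (n + 1) := by
    rw [vsum, sum_range_succ, Nat.cast_succ, vsum]
  rw [add_sub_cancel_right, hlast, Nat.cast_add, Nat.cast_two, vcert_succ_eq_vterm] at htel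
  linarith

lemma vsum_head_zero (n : ℕ) (j : ℤ) :
    vsum (n + 1) n 0 j = (-1) ^ (n + 1) * gchoose 0 (n + 1 - j) := by
  induction n generalizing j with
  | zero => simp [vsum, vterm, gchoose_of_neg, show gchoose 0 0 = 1 from rfl]
  | succ n ih =>
    rw [Nat.cast_succ, vsum_head_succ, ih, show (n : ℤ) + 1 - (j - 1) = n + 1 + 1 - j by ring]
    ring

lemma vsum_head (l n : ℕ) (j : ℤ) :
    vsum (n + 1) n l j = (-1) ^ (n + 1) * gchoose l (n + 1 - j) := by
  induction l generalizing j with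
  | zero => exact vsum_head_zero n j
  | succ l ih =>
    rw [Nat.cast_succ, vsum_add_one, ih, ih, gchoose_add_one,
      show (n : ℤ) + 1 - j - 1 = n + 1 - (j + 1) by ring]
    ring

lemma sum_Icc_zero_natCast {M : Type*} [AddCommMonoid M] (f : ℤ → M) (m : ℕ) :
    ∑ i ∈ Icc (0 : ℤ) m, f i = ∑ i ∈ range (m + 1), f i := by
  rw [Int.Icc_eq_finset_map, sum_map]
  simp

theorem stmt_19 (n l : ℕ) (h : n < l) :
    (∑ i ∈ Finset.Icc (0 : ℤ) l,
        (-(gchoose ((n : ℤ) - i) i * gchoose ((l : ℤ) + i) (2 * i + 1))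
          + gchoose ((n : ℤ) - i) (i - 1) * gchoose ((l : ℤ) + i) (2 * i)) = 0)
    ∧ (∑ i ∈ Finset.Icc (0 : ℤ) n,
        (-(gchoose ((n : ℤ) - i) i * gchoose ((l : ℤ) + i) (2 * i + 1))
          + gchoose ((n : ℤ) - i) (i - 1) * gchoose ((l : ℤ) + i) (2 * i))
        = (-1) ^ (n + 1) * (l.choose (n + 1) : ℤ))
    ∧ (∑ i ∈ Finset.Icc ((n : ℤ) + 1) l,
        (-(gchoose ((n : ℤ) - i) i * gchoose ((l : ℤ) + i) (2 * i + 1))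
          + gchoose ((n : ℤ) - i) (i - 1) * gchoose ((l : ℤ) + i) (2 * i))
        = (-1) ^ n * (l.choose (n + 1) : ℤ)) := by
  have hterm (i : ℤ) : -(gchoose (n - i) i * gchoose (l + i) (2 * i + 1))
      + gchoose (n - i) (i - 1) * gchoose (l + i) (2 * i) = vterm n l 0 i := by
    simp only [vterm, sub_zero]
  simp only [hterm]
  have hfull : ∑ i ∈ Icc (0 : ℤ) l, vterm n l 0 i = 0 := by
    rw [sum_Icc_zero_natCast]
    exact vsum_eq_zero l (M := l + 1) (by omega) n
  have hhead : ∑ i ∈ Icc (0 : ℤ) n, vterm n l 0 i = (-1) ^ (n + 1) * l.choose (n + 1) := by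
    rw [sum_Icc_zero_natCast, ← vsum, vsum_head, sub_zero, ← Nat.cast_succ, gchoose_natCast]
  refine ⟨hfull, hhead, ?_⟩
  have hsplit : Icc (0 : ℤ) l = Icc 0 (n : ℤ) ∪ Icc ((n : ℤ) + 1) l := by
    ext i
    simp only [mem_union, mem_Icc]
    omega
  rw [hsplit, sum_union (disjoint_left.2 fun i hi hi' => by simp only [mem_Icc] at hi hi'; omega),
    hhead] at hfull
  linear_combination hfull
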